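/- arXiv:1511.02534 — 3 statements merged into one kernel-verified Lean document; each statement's English description precedes it below -/
import Mathlib

section
/- Let c > 0 and define g(ℓ) = -(1 - c - ℓ + sqrt((1-ℓ-c)^2 - 4ℓc))/(2c) - 1 for ℓ ≥ (1+√c)^2. Then g is strictly decreasing on ((1+√c)^2, ∞), i.e., g'(ℓ) < 0 for all ℓ > (1+√c)^2. -/
lemma g_aux (c : ℝ) (hc : 0 < c) (ℓ : ℝ) (hℓ : (1 + Real.sqrt c) ^ 2 < ℓ) :
    ∃ d : ℝ, d < 0 ∧ HasDerivAt
      (fun ℓ : ℝ => -(1 - c - ℓ + Real.sqrt ((1 - ℓ - c) ^ 2 - 4 * ℓ * c)) / (2 * c) - 1)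
      d ℓ := by
  have hsc : 0 < Real.sqrt c := Real.sqrt_pos.mpr hc
  have hsq : Real.sqrt c ^ 2 = c := Real.sq_sqrt hc.le
  have hℓ' : 1 + 2 * Real.sqrt c + c < ℓ := by nlinarith
  have ht : 2 * Real.sqrt c < ℓ - c - 1 := by linarith
  set D : ℝ := (1 - ℓ - c) ^ 2 - 4 * ℓ * c with hDdef
  have hDeq : D = (ℓ - c - 1) ^ 2 - 4 * c := by rw [hDdef]; ring
  have hD : 0 < D := by nlinarith
  set S : ℝ := Real.sqrt D with hSdef
  have hS : 0 < S := Real.sqrt_pos.mpr hD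
  have hSlt : S < ℓ - c - 1 := by
    have h1 : S < Real.sqrt ((ℓ - c - 1) ^ 2) := Real.sqrt_lt_sqrt hD.le (by nlinarith)
    rwa [Real.sqrt_sq (by nlinarith)] at h1
  -- derivative of inner polynomial
  have h1 : HasDerivAt (fun x : ℝ => 1 - x - c) (-1) ℓ := by
    simpa using ((hasDerivAt_id ℓ).const_sub 1).sub_const c
  have hu : HasDerivAt (fun x : ℝ => (1 - x - c) ^ 2 - 4 * x * c)
      ((2 : ℕ) * (1 - ℓ - c) ^ 1 * (-1) - 4 * c) ℓ := by
    have h2 := h1.fun_pow 2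
    have h3 : HasDerivAt (fun x : ℝ => 4 * x * c) (4 * c) ℓ := by
      simpa using ((hasDerivAt_id ℓ).const_mul 4).mul_const c
    simpa using h2.fun_sub h3
  have hsqrt : HasDerivAt (fun x : ℝ => Real.sqrt ((1 - x - c) ^ 2 - 4 * x * c))
      (1 / (2 * S) * ((2 : ℕ) * (1 - ℓ - c) ^ 1 * (-1) - 4 * c)) ℓ := by
    have := (Real.hasDerivAt_sqrt (x := D) hD.ne').comp ℓ hu
    simpa [hSdef, hDdef, Function.comp_def] using this
  have hf : HasDerivAt
      (fun ℓ : ℝ => -(1 - c - ℓ + Real.sqrt ((1 - ℓ - c) ^ 2 - 4 * ℓ * c)) / (2 * c) - 1)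
      (-(-1 + 1 / (2 * S) * ((2 : ℕ) * (1 - ℓ - c) ^ 1 * (-1) - 4 * c)) / (2 * c)) ℓ := by
    have hin : HasDerivAt (fun x : ℝ => 1 - c - x + Real.sqrt ((1 - x - c) ^ 2 - 4 * x * c))
        (-1 + 1 / (2 * S) * ((2 : ℕ) * (1 - ℓ - c) ^ 1 * (-1) - 4 * c)) ℓ := by
      have h4 : HasDerivAt (fun x : ℝ => 1 - c - x) (-1) ℓ := by
        simpa using (hasDerivAt_id ℓ).const_sub (1 - c)
      exact h4.add hsqrt
    exact (hin.neg.div_const (2 * c)).sub_const 1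
  refine ⟨_, ?_, hf⟩
  have hval : 1 / (2 * S) * ((2 : ℕ) * (1 - ℓ - c) ^ 1 * (-1) - 4 * c) = (ℓ - c - 1) / S := by
    field_simp
    ring
  have hgt : 1 < (ℓ - c - 1) / S := (one_lt_div hS).mpr hSlt
  apply div_neg_of_neg_of_pos
  · rw [hval]; linarith
  · linarith

/-- `g(ℓ) = -(1-c-ℓ+√((1-ℓ-c)²-4ℓc))/(2c) - 1` is strictly decreasing on
`((1+√c)², ∞)`, i.e. its derivative is negative there. -/
theorem g_strict_anti (c : ℝ) (hc : 0 < c) :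
    StrictAntiOn
      (fun ℓ : ℝ => -(1 - c - ℓ + Real.sqrt ((1 - ℓ - c) ^ 2 - 4 * ℓ * c)) / (2 * c) - 1)
      (Set.Ioi ((1 + Real.sqrt c) ^ 2)) ∧
    ∀ ℓ : ℝ, (1 + Real.sqrt c) ^ 2 < ℓ →
      deriv
        (fun ℓ : ℝ => -(1 - c - ℓ + Real.sqrt ((1 - ℓ - c) ^ 2 - 4 * ℓ * c)) / (2 * c) - 1)
        ℓ < 0 := by
  have hderiv : ∀ ℓ : ℝ, (1 + Real.sqrt c) ^ 2 < ℓ →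
      deriv (fun ℓ : ℝ => -(1 - c - ℓ + Real.sqrt ((1 - ℓ - c) ^ 2 - 4 * ℓ * c)) / (2 * c) - 1)
        ℓ < 0 := by
    intro ℓ hℓ
    obtain ⟨d, hd, hf⟩ := g_aux c hc ℓ hℓ
    rwa [hf.deriv]
  refine ⟨?_, hderiv⟩
  have hcont : Continuous
      (fun ℓ : ℝ => -(1 - c - ℓ + Real.sqrt ((1 - ℓ - c) ^ 2 - 4 * ℓ * c)) / (2 * c) - 1) := by
    fun_prop
  apply strictAntiOn_of_deriv_neg (convex_Ioi _) hcont.continuousOn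
  intro x hx
  rw [interior_Ioi] at hx
  exact hderiv x hx
end

section
/- Let M be an n×n Hermitian matrix, B₁ an n×r matrix with B₁*B₁ = I_r, and ℓ a real number that is not an eigenvalue of M and satisfies det(B₁*(ℓI - M)^{-1}B₁) ≠ 0. Then B₁*MB₁ + B₁*MB₂(ℓI - B₂*MB₂)^{-1}B₂*MB₁ = ℓ·I_r - (B₁*(ℓI - M)^{-1}B₁)^{-1}, where B₂ is any n×(n−r) matrix such that (B₁ : B₂) is unitary (so B₂B₂* = I − B₁B₁*), provided ℓ is not an eigenvalue of B₂*MB₂. -/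
open Matrix

/-- Deterministic block-resolvent identity:
`B₁*MB₁ + B₁*MB₂(ℓI − B₂*MB₂)⁻¹B₂*MB₁ = ℓI − (B₁*(ℓI − M)⁻¹B₁)⁻¹`. -/
theorem block_resolvent_identity (n r : ℕ)
    (M : Matrix (Fin n) (Fin n) ℂ) (hM : M.IsHermitian)
    (B₁ : Matrix (Fin n) (Fin r) ℂ) (B₂ : Matrix (Fin n) (Fin (n - r)) ℂ)
    (hB₁ : B₁ᴴ * B₁ = 1)
    (hU : (fromCols B₁ B₂)ᴴ * fromCols B₁ B₂ = 1)
    (hU' : fromCols B₁ B₂ * (fromCols B₁ B₂)ᴴ = 1)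
    (ℓ : ℝ)
    (h1 : ((ℓ : ℂ) • (1 : Matrix (Fin n) (Fin n) ℂ) - M).det ≠ 0)
    (h2 : (B₁ᴴ * ((ℓ : ℂ) • (1 : Matrix (Fin n) (Fin n) ℂ) - M)⁻¹ * B₁).det ≠ 0)
    (h3 : ((ℓ : ℂ) • (1 : Matrix (Fin (n - r)) (Fin (n - r)) ℂ) - B₂ᴴ * M * B₂).det ≠ 0) :
    B₁ᴴ * M * B₁ +
        B₁ᴴ * M * B₂ *
          ((ℓ : ℂ) • (1 : Matrix (Fin (n - r)) (Fin (n - r)) ℂ) - B₂ᴴ * M * B₂)⁻¹ *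
          B₂ᴴ * M * B₁ =
      (ℓ : ℂ) • (1 : Matrix (Fin r) (Fin r) ℂ) -
        (B₁ᴴ * ((ℓ : ℂ) • (1 : Matrix (Fin n) (Fin n) ℂ) - M)⁻¹ * B₁)⁻¹ := by
  -- block facts from unitarity
  have hU2 : fromBlocks (B₁ᴴ * B₁) (B₁ᴴ * B₂) (B₂ᴴ * B₁) (B₂ᴴ * B₂)
      = fromBlocks 1 0 0 1 := by
    rw [← fromRows_mul_fromCols, ← conjTranspose_fromCols_eq_fromRows_conjTranspose,
      hU, ← fromBlocks_one]
  have h12 : B₁ᴴ * B₂ = 0 := congrArg Matrix.toBlocks₁₂ hU2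
  have h21 : B₂ᴴ * B₁ = 0 := congrArg Matrix.toBlocks₂₁ hU2
  have hB₂ : B₂ᴴ * B₂ = 1 := congrArg Matrix.toBlocks₂₂ hU2
  have hsum : B₁ * B₁ᴴ + B₂ * B₂ᴴ = 1 := by
    rw [← fromCols_mul_fromRows, ← conjTranspose_fromCols_eq_fromRows_conjTranspose, hU']
  set L : Matrix (Fin n) (Fin n) ℂ := (ℓ : ℂ) • 1 - M with hLdef
  set A22 : Matrix (Fin (n - r)) (Fin (n - r)) ℂ :=
    (ℓ : ℂ) • 1 - B₂ᴴ * M * B₂ with hA22def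
  -- inverse facts
  have eL : ∀ Z : Matrix (Fin n) (Fin r) ℂ, L * (L⁻¹ * Z) = Z := fun Z => by
    rw [← Matrix.mul_assoc, mul_nonsing_inv _ (Ne.isUnit h1), Matrix.one_mul]
  have eA : ∀ Z : Matrix (Fin (n - r)) (Fin r) ℂ, A22⁻¹ * (A22 * Z) = Z := fun Z => by
    rw [← Matrix.mul_assoc, nonsing_inv_mul _ (Ne.isUnit h3), Matrix.one_mul]
  -- applied-form identities
  have e1 : ∀ Z : Matrix (Fin n) (Fin r) ℂ,
      B₁ * (B₁ᴴ * Z) = Z - B₂ * (B₂ᴴ * Z) := fun Z => by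
    have : (B₁ * B₁ᴴ) * Z = (1 - B₂ * B₂ᴴ) * Z := by rw [eq_sub_iff_add_eq.mpr hsum]
    rw [← Matrix.mul_assoc, this, Matrix.sub_mul, Matrix.one_mul, Matrix.mul_assoc]
  have e6 : ∀ Z : Matrix (Fin (n - r)) (Fin r) ℂ,
      B₂ᴴ * (L * (B₂ * Z)) = A22 * Z := fun Z => by
    have h : B₂ᴴ * L * B₂ = A22 := by
      rw [hLdef, hA22def, Matrix.mul_sub, Matrix.sub_mul, Matrix.mul_smul, Matrix.smul_mul,
        Matrix.mul_one, hB₂, Matrix.mul_assoc]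
    rw [← Matrix.mul_assoc, ← Matrix.mul_assoc, h]
  -- the Schur complement is a left inverse of B₁ᴴ L⁻¹ B₁
  have key : ((ℓ : ℂ) • (1 : Matrix (Fin r) (Fin r) ℂ)
        - B₁ᴴ * M * B₁ - B₁ᴴ * M * B₂ * A22⁻¹ * B₂ᴴ * M * B₁)
      * (B₁ᴴ * L⁻¹ * B₁) = 1 := by
    have hS : (ℓ : ℂ) • (1 : Matrix (Fin r) (Fin r) ℂ)
        - B₁ᴴ * M * B₁ - B₁ᴴ * M * B₂ * A22⁻¹ * B₂ᴴ * M * B₁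
        = B₁ᴴ * L * B₁ - B₁ᴴ * L * B₂ * A22⁻¹ * (B₂ᴴ * L * B₁) := by
      have hl1 : B₁ᴴ * L * B₁ = (ℓ : ℂ) • 1 - B₁ᴴ * M * B₁ := by
        rw [hLdef, Matrix.mul_sub, Matrix.sub_mul, Matrix.mul_smul, Matrix.smul_mul,
          Matrix.mul_one, hB₁]
      have hl2 : B₁ᴴ * L * B₂ = -(B₁ᴴ * M * B₂) := by
        rw [hLdef, Matrix.mul_sub, Matrix.sub_mul, Matrix.mul_smul, Matrix.smul_mul,
          Matrix.mul_one, h12, smul_zero, zero_sub]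
      have hl3 : B₂ᴴ * L * B₁ = -(B₂ᴴ * M * B₁) := by
        rw [hLdef, Matrix.mul_sub, Matrix.sub_mul, Matrix.mul_smul, Matrix.smul_mul,
          Matrix.mul_one, h21, smul_zero, zero_sub]
      rw [hl1, hl2, hl3]
      simp only [Matrix.neg_mul, Matrix.mul_neg, neg_neg]
      simp only [Matrix.mul_assoc]
    rw [hS]
    simp only [Matrix.sub_mul, Matrix.mul_assoc, e1, Matrix.mul_sub]
    simp only [eL, e6, eA, h21, Matrix.mul_zero, sub_zero, hB₁]
    abel
  rw [inv_eq_left_inv key]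
  abel
end

section
/- Let e be an n×T complex matrix, B = (B₁ : B₂) an n×n unitary matrix with B₁ having r columns, D(ℓ) = ℓI_T − (1/T)e*B₂B₂*e and H(ℓ) = ℓI_T − (1/T)e*e, with both invertible. Then (1/T)B₁*eD(ℓ)^{-1}e*B₁ = (I_r + (1/T)B₁*eH(ℓ)^{-1}e*B₁)^{-1} · (1/T)B₁*eH(ℓ)^{-1}e*B₁, provided the indicated inverse exists. -/
open Matrix

/-- Resolvent identity after a finite-rank perturbation:
`(1/T)B₁*e D(ℓ)⁻¹ e*B₁ = (I + (1/T)B₁*e H(ℓ)⁻¹ e*B₁)⁻¹ · (1/T)B₁*e H(ℓ)⁻¹ e*B₁`. -/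
theorem finite_rank_resolvent_identity (n T r : ℕ) (hT : 0 < T)
    (e : Matrix (Fin n) (Fin T) ℂ)
    (B₁ : Matrix (Fin n) (Fin r) ℂ) (B₂ : Matrix (Fin n) (Fin (n - r)) ℂ)
    (hU : (fromCols B₁ B₂)ᴴ * fromCols B₁ B₂ = 1)
    (hU' : fromCols B₁ B₂ * (fromCols B₁ B₂)ᴴ = 1)
    (ℓ : ℝ)
    (hD : ((ℓ : ℂ) • (1 : Matrix (Fin T) (Fin T) ℂ) -
        (T : ℂ)⁻¹ • (eᴴ * (B₂ * B₂ᴴ) * e)).det ≠ 0)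
    (hH : ((ℓ : ℂ) • (1 : Matrix (Fin T) (Fin T) ℂ) - (T : ℂ)⁻¹ • (eᴴ * e)).det ≠ 0)
    (hInv : ((1 : Matrix (Fin r) (Fin r) ℂ) +
        (T : ℂ)⁻¹ •
          (B₁ᴴ * e *
            ((ℓ : ℂ) • (1 : Matrix (Fin T) (Fin T) ℂ) - (T : ℂ)⁻¹ • (eᴴ * e))⁻¹ *
            eᴴ * B₁)).det ≠ 0) :
    (T : ℂ)⁻¹ •
        (B₁ᴴ * e *
          ((ℓ : ℂ) • (1 : Matrix (Fin T) (Fin T) ℂ) -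
            (T : ℂ)⁻¹ • (eᴴ * (B₂ * B₂ᴴ) * e))⁻¹ *
          eᴴ * B₁) =
      ((1 : Matrix (Fin r) (Fin r) ℂ) +
          (T : ℂ)⁻¹ •
            (B₁ᴴ * e *
              ((ℓ : ℂ) • (1 : Matrix (Fin T) (Fin T) ℂ) - (T : ℂ)⁻¹ • (eᴴ * e))⁻¹ *
              eᴴ * B₁))⁻¹ *
        ((T : ℂ)⁻¹ •
          (B₁ᴴ * e *
            ((ℓ : ℂ) • (1 : Matrix (Fin T) (Fin T) ℂ) - (T : ℂ)⁻¹ • (eᴴ * e))⁻¹ *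
            eᴴ * B₁)) := by
  have hBB : B₂ * B₂ᴴ = 1 - B₁ * B₁ᴴ := by
    rw [conjTranspose_fromCols_eq_fromRows_conjTranspose, fromCols_mul_fromRows] at hU'
    exact eq_sub_of_add_eq' hU'
  set H : Matrix (Fin T) (Fin T) ℂ :=
    (ℓ : ℂ) • (1 : Matrix (Fin T) (Fin T) ℂ) - (T : ℂ)⁻¹ • (eᴴ * e) with hHdef
  set D : Matrix (Fin T) (Fin T) ℂ :=
    (ℓ : ℂ) • (1 : Matrix (Fin T) (Fin T) ℂ) - (T : ℂ)⁻¹ • (eᴴ * (B₂ * B₂ᴴ) * e) with hDdef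
  have hD' : D = H + (T : ℂ)⁻¹ • (eᴴ * B₁ * (B₁ᴴ * e)) := by
    rw [hDdef, hHdef, hBB]
    simp only [Matrix.mul_sub, Matrix.sub_mul, Matrix.mul_one, smul_sub, Matrix.mul_assoc]
    abel
  have hHinv : H⁻¹ * H = 1 := nonsing_inv_mul H (isUnit_iff_ne_zero.mpr hH)
  have hDinv : D * D⁻¹ = 1 := mul_nonsing_inv D (isUnit_iff_ne_zero.mpr hD)
  set G : Matrix (Fin r) (Fin r) ℂ := (T : ℂ)⁻¹ • (B₁ᴴ * e * H⁻¹ * eᴴ * B₁) with hGdef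
  set X : Matrix (Fin r) (Fin r) ℂ := (T : ℂ)⁻¹ • (B₁ᴴ * e * D⁻¹ * eᴴ * B₁) with hXdef
  have key : (1 + G) * X = G := by
    have h1 : H⁻¹ * D = 1 + (T : ℂ)⁻¹ • (H⁻¹ * (eᴴ * B₁ * (B₁ᴴ * e))) := by
      rw [hD', Matrix.mul_add, Matrix.mul_smul, hHinv]
    have h2 : B₁ᴴ * e * H⁻¹ * (D * D⁻¹) * eᴴ * B₁ = B₁ᴴ * e * H⁻¹ * eᴴ * B₁ := by
      rw [hDinv, Matrix.mul_one]
    have hassoc : B₁ᴴ * e * H⁻¹ * (D * D⁻¹) * eᴴ * B₁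
        = B₁ᴴ * e * (H⁻¹ * D) * (D⁻¹ * eᴴ * B₁) := by
      simp only [Matrix.mul_assoc]
    rw [hassoc] at h2
    rw [h1] at h2
    have h3 : B₁ᴴ * e * (1 + (T : ℂ)⁻¹ • (H⁻¹ * (eᴴ * B₁ * (B₁ᴴ * e)))) * (D⁻¹ * eᴴ * B₁)
        = B₁ᴴ * e * D⁻¹ * eᴴ * B₁
          + (T : ℂ)⁻¹ • (B₁ᴴ * e * H⁻¹ * eᴴ * B₁ * (B₁ᴴ * e * D⁻¹ * eᴴ * B₁)) := by
      simp only [Matrix.mul_add, Matrix.add_mul, Matrix.mul_one, Matrix.mul_smul,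
        Matrix.smul_mul, Matrix.mul_assoc]
    rw [h3] at h2
    have h4 := congrArg (fun M => (T : ℂ)⁻¹ • M) h2
    simp only [smul_add, smul_smul] at h4
    rw [Matrix.add_mul, Matrix.one_mul, hGdef, hXdef, smul_mul_smul_comm]
    exact h4
  calc X = 1 * X := (Matrix.one_mul X).symm
    _ = ((1 + G)⁻¹ * (1 + G)) * X := by rw [nonsing_inv_mul _ (isUnit_iff_ne_zero.mpr hInv)]
    _ = (1 + G)⁻¹ * ((1 + G) * X) := by rw [Matrix.mul_assoc]
    _ = (1 + G)⁻¹ * G := by rw [key]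
end
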